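/- Let I = (𝔼, D, c, f) be a CMP instance whose objective f is of type sum, product, or bottleneck, and let E = {e_1,…,e_k} ⊆ 𝔼 be such that there exists an optimal solution S* of I with E ⊆ 𝔼 ∖ S*. Then l'(I,E) = sup{α ∈ ℝ : for every optimal solution S* of I there exists α⃗ = (α_1,…,α_k) with 0 ≤ α_l < maxdec(e_l) for all l and α = Σ_{l=1}^k α_l such that S* is optimal for I_{−α⃗,E}}, i.e., the new regular set lower tolerance coincides with the current regular set lower tolerance of E. -/

import Mathlib

open scoped ENNReal BigOperators

/-- Objective type of a combinatorial minimization problem: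
sum, product, or bottleneck. -/
inductive ObjType where
  | sum : ObjType
  | prod : ObjType
  | bottleneck : ObjType
deriving DecidableEq

/-- The cost `f_c(S)` of a feasible solution `S` under cost function `c`:
the sum, the product, or the maximum (for nonempty `S`) of the element costs. -/
noncomputable def objCost {ι : Type*} (t : ObjType) (c : ι → ℝ) (S : Finset ι) : ℝ :=
  match t with
  | ObjType.sum => ∑ e ∈ S, c e
  | ObjType.prod => ∏ e ∈ S, c e
  | ObjType.bottleneck => if h : S.Nonempty then S.sup' h c else 0

/-- The optimal objective value `f(I)` of the instance with feasible set `D`. -/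
noncomputable def optVal {ι : Type*} (t : ObjType) (c : ι → ℝ) (D : Finset (Finset ι)) : ℝ :=
  if h : D.Nonempty then D.inf' h (objCost t c) else 0

/-- `S` is an optimal solution of the instance `(𝔼, D, c, f)`. -/
def isOpt {ι : Type*} (t : ObjType) (c : ι → ℝ) (D : Finset (Finset ι)) (S : Finset ι) : Prop :=
  S ∈ D ∧ objCost t c S = optVal t c D

/-- `0 ≤ a < maxdec(e)`, where `maxdec(e) = ∞` for sum/bottleneck objectives and
`maxdec(e) = c(e)` for the product objective. -/
def decOK {ι : Type*} (t : ObjType) (c : ι → ℝ) (e : ι) (a : ℝ) : Prop :=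
  0 ≤ a ∧ (t = ObjType.prod → a < c e)

/-- Extended single upper tolerance
`u'(I,e) = sup {α ≥ 0 : every optimal solution of I is optimal for I_{α,e}}` valued in `[0,∞]`. -/
noncomputable def uTol {ι : Type*} [DecidableEq ι] (t : ObjType) (c : ι → ℝ)
    (D : Finset (Finset ι)) (e : ι) : ℝ≥0∞ :=
  sSup (ENNReal.ofReal '' {a : ℝ | 0 ≤ a ∧
    ∀ S : Finset ι, isOpt t c D S →
      isOpt t (fun x => if x = e then c x + a else c x) D S})

/-- Extended regular set upper tolerance `u'(I,E)`, valued in `[0,∞]`. -/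
noncomputable def uTolSet {ι : Type*} [DecidableEq ι] (t : ObjType) (c : ι → ℝ)
    (D : Finset (Finset ι)) (E : Finset ι) : ℝ≥0∞ :=
  sSup (ENNReal.ofReal '' {a : ℝ |
    ∀ S : Finset ι, isOpt t c D S →
      ∃ α : ι → ℝ, (∀ x, 0 ≤ α x) ∧ (∀ x ∉ E, α x = 0) ∧
        a = ∑ x ∈ E, α x ∧ isOpt t (fun x => c x + α x) D S})

/-- Extended reverse set upper tolerance `u_b'(I,E)`, valued in `[0,∞]` (`inf ∅ = ∞`). -/
noncomputable def uTolSetRev {ι : Type*} [DecidableEq ι] (t : ObjType) (c : ι → ℝ)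
    (D : Finset (Finset ι)) (E : Finset ι) : ℝ≥0∞ :=
  sInf (ENNReal.ofReal '' {a : ℝ |
    ∃ S : Finset ι, isOpt t c D S ∧
      ∃ α : ι → ℝ, (∀ x, 0 ≤ α x) ∧ (∀ x ∉ E, α x = 0) ∧
        a = ∑ x ∈ E, α x ∧ ¬ isOpt t (fun x => c x + α x) D S})

/-- New single lower tolerance
`l'(I,e) = sup {α : 0 ≤ α < maxdec(e), f(I_{−α,e}) = f(I)}`, valued in `[0,∞]`. -/
noncomputable def lTol {ι : Type*} [DecidableEq ι] (t : ObjType) (c : ι → ℝ)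
    (D : Finset (Finset ι)) (e : ι) : ℝ≥0∞ :=
  sSup (ENNReal.ofReal '' {a : ℝ | decOK t c e a ∧
    optVal t (fun x => if x = e then c x - a else c x) D = optVal t c D})

/-- New regular set lower tolerance `l'(I,E)`, valued in `[0,∞]`. -/
noncomputable def lTolSet {ι : Type*} [DecidableEq ι] (t : ObjType) (c : ι → ℝ)
    (D : Finset (Finset ι)) (E : Finset ι) : ℝ≥0∞ :=
  sSup (ENNReal.ofReal '' {a : ℝ |
    ∃ α : ι → ℝ, (∀ x ∈ E, decOK t c x (α x)) ∧ (∀ x ∉ E, α x = 0) ∧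
      a = ∑ x ∈ E, α x ∧ optVal t (fun x => c x - α x) D = optVal t c D})

/-- New reverse set lower tolerance `l_b'(I,E)`, valued in `[0,∞]` (`inf ∅ = ∞`). -/
noncomputable def lTolSetRev {ι : Type*} [DecidableEq ι] (t : ObjType) (c : ι → ℝ)
    (D : Finset (Finset ι)) (E : Finset ι) : ℝ≥0∞ :=
  sInf (ENNReal.ofReal '' {a : ℝ |
    ∃ α : ι → ℝ, (∀ x ∈ E, decOK t c x (α x)) ∧ (∀ x ∉ E, α x = 0) ∧
      a = ∑ x ∈ E, α x ∧ optVal t (fun x => c x - α x) D < optVal t c D})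

/-! Admissible decreases on `E` never raise an objective value. Hence if they leave `f(I)`
unchanged, every optimal solution of `I` stays optimal; conversely, the cost of an optimal
solution avoiding `E` is unaffected, so if it stays optimal the optimal value is unchanged. -/

lemma objCost_congr {ι : Type*} (t : ObjType) {f g : ι → ℝ} {S : Finset ι}
    (h : ∀ x ∈ S, f x = g x) : objCost t f S = objCost t g S := by
  cases t with
  | sum => exact Finset.sum_congr rfl h
  | prod => exact Finset.prod_congr rfl h
  | bottleneck =>
    dsimp only [objCost]
    split_ifs with hS
    · exact Finset.sup'_congr hS rfl h
    · rfl

lemma objCost_mono {ι : Type*} (t : ObjType) {f g : ι → ℝ} (S : Finset ι)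
    (h : ∀ x, g x ≤ f x) (hg : t = ObjType.prod → ∀ x, 0 ≤ g x) :
    objCost t g S ≤ objCost t f S := by
  cases t with
  | sum => exact Finset.sum_le_sum fun x _ => h x
  | prod => exact Finset.prod_le_prod (fun x _ => hg rfl x) fun x _ => h x
  | bottleneck =>
    dsimp only [objCost]
    split_ifs with hS
    · exact Finset.sup'_le _ _ fun x hx => (h x).trans (Finset.le_sup' f hx)
    · rfl

lemma optVal_le_objCost {ι : Type*} (t : ObjType) (c : ι → ℝ) {D : Finset (Finset ι)}
    {S : Finset ι} (hS : S ∈ D) : optVal t c D ≤ objCost t c S := by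
  rw [optVal, dif_pos ⟨S, hS⟩]
  exact Finset.inf'_le _ hS

lemma isOpt_of_le_of_optVal_eq {ι : Type*} {t : ObjType} {c g : ι → ℝ}
    {D : Finset (Finset ι)} {S : Finset ι} (hle : ∀ x, g x ≤ c x)
    (hg : t = ObjType.prod → ∀ x, 0 ≤ g x) (hval : optVal t g D = optVal t c D)
    (hS : isOpt t c D S) : isOpt t g D S := by
  refine ⟨hS.1, le_antisymm ?_ (optVal_le_objCost t g hS.1)⟩
  calc objCost t g S ≤ objCost t c S := objCost_mono t S hle hg
    _ = optVal t g D := hS.2.trans hval.symm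

lemma optVal_eq_of_isOpt_of_eqOn {ι : Type*} {t : ObjType} {c g : ι → ℝ}
    {D : Finset (Finset ι)} {S : Finset ι} (heq : ∀ x ∈ S, g x = c x)
    (hc : isOpt t c D S) (hg : isOpt t g D S) : optVal t g D = optVal t c D := by
  rw [← hg.2, ← hc.2, objCost_congr t heq]

lemma sub_le_self_of_decOK {ι : Type*} {t : ObjType} {c α : ι → ℝ} {E : Finset ι}
    (hdec : ∀ x ∈ E, decOK t c x (α x)) (hzero : ∀ x ∉ E, α x = 0) (x : ι) :
    c x - α x ≤ c x := by
  by_cases hx : x ∈ E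
  · linarith [(hdec x hx).1]
  · simp [hzero x hx]

lemma sub_nonneg_of_decOK {ι : Type*} {t : ObjType} {c α : ι → ℝ} {E : Finset ι}
    (hpos : t = ObjType.prod → ∀ x, 0 < c x) (hdec : ∀ x ∈ E, decOK t c x (α x))
    (hzero : ∀ x ∉ E, α x = 0) (ht : t = ObjType.prod) (x : ι) : 0 ≤ c x - α x := by
  by_cases hx : x ∈ E
  · linarith [(hdec x hx).2 ht]
  · linarith [hzero x hx, hpos ht x]

theorem lrg_consistent_general {ι : Type*} [DecidableEq ι]
    (t : ObjType) (c : ι → ℝ) (D : Finset (Finset ι))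
    (hpos : t = ObjType.prod → ∀ x, 0 < c x)
    (E : Finset ι)
    (hout : ∃ S : Finset ι, isOpt t c D S ∧ ∀ x ∈ E, x ∉ S) :
    lTolSet t c D E =
      sSup (ENNReal.ofReal '' {a : ℝ |
        ∀ S : Finset ι, isOpt t c D S →
          ∃ α : ι → ℝ, (∀ x ∈ E, decOK t c x (α x)) ∧ (∀ x ∉ E, α x = 0) ∧
            a = ∑ x ∈ E, α x ∧ isOpt t (fun x => c x - α x) D S}) := by
  unfold lTolSet
  congr 2
  ext a
  constructor
  · rintro ⟨α, hdec, hzero, ha, hval⟩ S hS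
    exact ⟨α, hdec, hzero, ha, isOpt_of_le_of_optVal_eq (sub_le_self_of_decOK hdec hzero)
      (sub_nonneg_of_decOK hpos hdec hzero) hval hS⟩
  · intro hall
    obtain ⟨S, hS, hdisj⟩ := hout
    obtain ⟨α, hdec, hzero, ha, hopt⟩ := hall S hS
    have heq : ∀ x ∈ S, c x - α x = c x := fun x hx => by
      rw [hzero x fun hxE => hdisj x hxE hx, sub_zero]
    exact ⟨α, hdec, hzero, ha, optVal_eq_of_isOpt_of_eqOn heq hS hopt⟩

/-- Theorem 4(b) (consistency): if some optimal solution is disjoint from `E`,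
then the new regular set lower tolerance `l'(I,E)` coincides with the current
regular set lower tolerance. -/
theorem lrg_consistent {ι : Type*} [Fintype ι] [DecidableEq ι]
    (t : ObjType) (c : ι → ℝ) (D : Finset (Finset ι))
    (hD : D.Nonempty) (hSne : ∀ S ∈ D, S.Nonempty)
    (hpos : t = ObjType.prod → ∀ x, 0 < c x)
    (E : Finset ι) (hE : E.Nonempty)
    (hout : ∃ S : Finset ι, isOpt t c D S ∧ ∀ x ∈ E, x ∉ S) :
    lTolSet t c D E =
      sSup (ENNReal.ofReal '' {a : ℝ |
        ∀ S : Finset ι, isOpt t c D S →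
          ∃ α : ι → ℝ, (∀ x ∈ E, decOK t c x (α x)) ∧ (∀ x ∉ E, α x = 0) ∧
            a = ∑ x ∈ E, α x ∧ isOpt t (fun x => c x - α x) D S}) :=
  lrg_consistent_general t c D hpos E hout
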